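/- arXiv:2102.10132 — 3 statements merged into one kernel-verified Lean document; each statement's English description precedes it below -/
import Mathlib

section
/- For every real t ≠ 0, the power series ∑_{k=0}^∞ (−1)^k t^{2k}/(k!·(k+1)!) equals (1/(π t)) ∫_0^π cos(θ − 2t sin θ) dθ. (This is the Bessel integral representation r(t) = J₁(2t)/t used for the spectral form factor of the GUE Hamiltonian.) -/
open Real Filter Topology MeasureTheory

set_option maxHeartbeats 1000000

/-- `r t = ∑_{k=0}^∞ (−1)^k t^{2k}/(k!·(k+1)!) = J₁(2t)/t`. -/
noncomputable def besselR (t : ℝ) : ℝ :=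
  ∑' k : ℕ, (-1) ^ k * t ^ (2 * k) / (k.factorial * (k + 1).factorial)

lemma wallis_prod_eq (n : ℕ) :
    ∏ i ∈ Finset.range n, (2 * (i : ℝ) + 1) / (2 * i + 2)
      = (2 * n).factorial / (4 ^ n * (n.factorial : ℝ) ^ 2) := by
  induction n with
  | zero => simp
  | succ k ih =>
    rw [Finset.prod_range_succ, ih]
    have h1 : (2 * (k + 1)) = (2 * k + 1) + 1 := by ring
    rw [h1, Nat.factorial_succ, Nat.factorial_succ, Nat.factorial_succ]
    have hf1 : ((2 * k).factorial : ℝ) ≠ 0 := Nat.cast_ne_zero.mpr (2 * k).factorial_ne_zero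
    have hf2 : ((k).factorial : ℝ) ≠ 0 := Nat.cast_ne_zero.mpr k.factorial_ne_zero
    have h2 : (2 * (k : ℝ) + 2) ≠ 0 := by positivity
    have h4 : (4 : ℝ) ^ k ≠ 0 := by positivity
    push_cast
    field_simp
    ring

lemma integral_sin_pow_even' (n : ℕ) :
    (∫ θ in (0:ℝ)..π, Real.sin θ ^ (2 * n))
      = π * (2 * n).factorial / (4 ^ n * (n.factorial : ℝ) ^ 2) := by
  rw [integral_sin_pow_even, wallis_prod_eq, mul_div_assoc]

lemma integral_sin_pow_mul_cos (m : ℕ) :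
    (∫ θ in (0:ℝ)..π, Real.sin θ ^ m * Real.cos θ) = 0 := by
  have := integral_sin_pow_mul_cos_pow_odd (a := 0) (b := π) m 0
  simp only [mul_zero, zero_add, pow_one] at this
  rw [this, Real.sin_zero, Real.sin_pi, intervalIntegral.integral_same]

/-- Bessel integral representation: for `t ≠ 0`,
`r(t) = (1/(π t)) ∫_0^π cos(θ − 2t sin θ) dθ`. -/
theorem besselR_integral_rep (t : ℝ) (ht : t ≠ 0) :
    besselR t = (1 / (π * t)) * ∫ θ in (0:ℝ)..π, Real.cos (θ - 2 * t * Real.sin θ) := by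
  set x : ℝ := 2 * t with hx
  -- the termwise functions
  set F : ℕ → ℝ → ℝ := fun n θ =>
    ((-1) ^ n * x ^ (2 * n) / (2 * n).factorial) * (Real.sin θ ^ (2 * n) * Real.cos θ)
      + ((-1) ^ n * x ^ (2 * n + 1) / (2 * n + 1).factorial) * Real.sin θ ^ (2 * n + 2)
    with hF
  set bound : ℕ → ℝ → ℝ := fun n _ =>
    |x| ^ (2 * n) / (2 * n).factorial + |x| ^ (2 * n + 1) / (2 * n + 1).factorial with hbound
  have hsum_even : Summable fun n : ℕ => |x| ^ (2 * n) / ((2 * n).factorial : ℝ) := by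
    have := Real.summable_pow_div_factorial |x|
    exact this.comp_injective (fun a b h => by omega)
  have hsum_odd : Summable fun n : ℕ => |x| ^ (2 * n + 1) / ((2 * n + 1).factorial : ℝ) := by
    have := Real.summable_pow_div_factorial |x|
    exact this.comp_injective (fun a b h => by omega)
  have hbound_sum : Summable fun n : ℕ =>
      |x| ^ (2 * n) / ((2 * n).factorial : ℝ) + |x| ^ (2 * n + 1) / (2 * n + 1).factorial :=
    hsum_even.add hsum_odd
  -- termwise integration
  have key : HasSum (fun n : ℕ => ∫ θ in (0:ℝ)..π, F n θ)
      (∫ θ in (0:ℝ)..π, Real.cos (θ - x * Real.sin θ)) := by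
    apply intervalIntegral.hasSum_integral_of_dominated_convergence bound
    · intro n
      apply Continuous.aestronglyMeasurable
      fun_prop
    · intro n
      filter_upwards with θ _
      have hs : |Real.sin θ| ≤ 1 := Real.abs_sin_le_one θ
      have hc : |Real.cos θ| ≤ 1 := Real.abs_cos_le_one θ
      have hxs : ∀ m : ℕ, |Real.sin θ| ^ m ≤ 1 := fun m => pow_le_one₀ (abs_nonneg _) hs
      have h1 : |((-1:ℝ)) ^ n * x ^ (2 * n) / (2 * n).factorial
            * (Real.sin θ ^ (2 * n) * Real.cos θ)|
          ≤ |x| ^ (2 * n) / (2 * n).factorial := by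
        simp only [abs_mul, abs_div, abs_pow, abs_neg, abs_one, one_pow, one_mul, Nat.abs_cast]
        have hle : |Real.sin θ| ^ (2 * n) * |Real.cos θ| ≤ 1 :=
          mul_le_one₀ (hxs _) (abs_nonneg _) hc
        calc |x| ^ (2 * n) / ((2 * n).factorial : ℝ) * (|Real.sin θ| ^ (2 * n) * |Real.cos θ|)
            ≤ |x| ^ (2 * n) / ((2 * n).factorial : ℝ) * 1 :=
              mul_le_mul_of_nonneg_left hle (by positivity)
          _ = |x| ^ (2 * n) / (2 * n).factorial := mul_one _
      have h2 : |((-1:ℝ)) ^ n * x ^ (2 * n + 1) / (2 * n + 1).factorial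
            * Real.sin θ ^ (2 * n + 2)|
          ≤ |x| ^ (2 * n + 1) / (2 * n + 1).factorial := by
        simp only [abs_mul, abs_div, abs_pow, abs_neg, abs_one, one_pow, one_mul, Nat.abs_cast]
        calc |x| ^ (2 * n + 1) / ((2 * n + 1).factorial : ℝ) * |Real.sin θ| ^ (2 * n + 2)
            ≤ |x| ^ (2 * n + 1) / ((2 * n + 1).factorial : ℝ) * 1 :=
              mul_le_mul_of_nonneg_left (hxs _) (by positivity)
          _ = |x| ^ (2 * n + 1) / (2 * n + 1).factorial := mul_one _
      calc ‖F n θ‖ ≤ _ + _ := norm_add_le _ _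
        _ ≤ bound n θ := add_le_add h1 h2
    · filter_upwards with θ _
      exact hbound_sum
    · simp only [hbound]
      exact intervalIntegrable_const
    · filter_upwards with θ _
      have hc := (Real.hasSum_cos (x * Real.sin θ)).mul_left (Real.cos θ)
      have hs := (Real.hasSum_sin (x * Real.sin θ)).mul_left (Real.sin θ)
      have hadd := hc.add hs
      have heq : (fun n : ℕ =>
          Real.cos θ * ((-1) ^ n * (x * Real.sin θ) ^ (2 * n) / (2 * n).factorial)
            + Real.sin θ * ((-1) ^ n * (x * Real.sin θ) ^ (2 * n + 1) / (2 * n + 1).factorial))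
          = fun n => F n θ := by
        funext n
        rw [hF]
        simp only [mul_pow]
        ring
      rw [heq] at hadd
      have : Real.cos θ * Real.cos (x * Real.sin θ)
          + Real.sin θ * Real.sin (x * Real.sin θ) = Real.cos (θ - x * Real.sin θ) :=
        (Real.cos_sub θ (x * Real.sin θ)).symm
      rwa [this] at hadd
  -- compute each integral
  have hint : ∀ n : ℕ, (∫ θ in (0:ℝ)..π, F n θ)
      = π * t * ((-1) ^ n * t ^ (2 * n) / (n.factorial * (n + 1).factorial)) := by
    intro n
    have hI1 : IntervalIntegrable (fun θ => ((-1:ℝ)) ^ n * x ^ (2 * n) / (2 * n).factorial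
        * (Real.sin θ ^ (2 * n) * Real.cos θ)) MeasureTheory.volume (0:ℝ) π := by
      apply Continuous.intervalIntegrable; fun_prop
    have hI2 : IntervalIntegrable (fun θ => ((-1:ℝ)) ^ n * x ^ (2 * n + 1) / (2 * n + 1).factorial
        * Real.sin θ ^ (2 * n + 2)) MeasureTheory.volume (0:ℝ) π := by
      apply Continuous.intervalIntegrable; fun_prop
    rw [hF]
    rw [intervalIntegral.integral_add hI1 hI2, intervalIntegral.integral_const_mul,
      intervalIntegral.integral_const_mul, integral_sin_pow_mul_cos, mul_zero, zero_add]
    have h22 : 2 * n + 2 = 2 * (n + 1) := by ring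
    rw [h22, integral_sin_pow_even']
    -- now pure algebra
    have hf0 : ((2 * n).factorial : ℝ) ≠ 0 := Nat.cast_ne_zero.mpr (2 * n).factorial_ne_zero
    have hf1 : ((2 * n + 1).factorial : ℝ) ≠ 0 := Nat.cast_ne_zero.mpr (2 * n + 1).factorial_ne_zero
    have hf2 : ((n).factorial : ℝ) ≠ 0 := Nat.cast_ne_zero.mpr n.factorial_ne_zero
    have e2 : (((2 * (n + 1)).factorial) : ℝ)
        = (2 * n + 2) * ((2 * n + 1) * (2 * n).factorial) := by
      have e1 : (2 * (n + 1)) = (2 * n + 1) + 1 := by ring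
      rw [e1, Nat.factorial_succ, Nat.factorial_succ]
      push_cast; ring
    have e3 : (((n + 1).factorial) : ℝ) = (n + 1) * n.factorial := by
      rw [Nat.factorial_succ]; push_cast; ring
    have e4 : (((2 * n + 1).factorial) : ℝ) = (2 * n + 1) * (2 * n).factorial := by
      rw [Nat.factorial_succ]; push_cast; ring
    have hx2 : x ^ (2 * n + 1) = 2 * 4 ^ n * (t * t ^ (2 * n)) := by
      rw [hx, mul_pow]
      have h2p : (2:ℝ) ^ (2 * n + 1) = 2 * 4 ^ n := by
        rw [pow_succ, pow_mul]; norm_num [mul_comm]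
      rw [h2p, pow_succ']
    have h4 : (4:ℝ) ^ (n + 1) = 4 * 4 ^ n := by rw [pow_succ]; ring
    rw [e2, e3, e4, hx2, h4]
    have h4n : (4:ℝ) ^ n ≠ 0 := by positivity
    have hn1 : ((n:ℝ) + 1) ≠ 0 := by positivity
    have h2n1 : (2 * (n:ℝ) + 1) ≠ 0 := by positivity
    have h2n2 : (2 * (n:ℝ) + 2) ≠ 0 := by positivity
    push_cast
    field_simp
    ring
  simp only [hint] at key
  -- conclude
  have hπt : π * t ≠ 0 := mul_ne_zero Real.pi_ne_zero ht
  have key2 : HasSum (fun n : ℕ => (-1) ^ n * t ^ (2 * n) / ((n.factorial : ℝ) * (n + 1).factorial))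
      ((∫ θ in (0:ℝ)..π, Real.cos (θ - x * Real.sin θ)) / (π * t)) := by
    have := key.div_const (π * t)
    simpa [mul_div_assoc, mul_div_cancel_left₀ _ hπt] using this
  have hxcongr : (∫ θ in (0:ℝ)..π, Real.cos (θ - x * Real.sin θ))
      = ∫ θ in (0:ℝ)..π, Real.cos (θ - 2 * t * Real.sin θ) := by rw [hx]
  rw [besselR, key2.tsum_eq, hxcongr, one_div, inv_mul_eq_div]
end

section
/- r(t) tends to 0 as t → +∞. -/
open Real Filter Topology

open Set MeasureTheory FourierTransform
open scoped Nat

theorem tendsto_integral_mul_cos_atTop {f : ℝ → ℝ} (hf : Integrable f) :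
    Tendsto (fun t => ∫ x, f x * cos (t * x)) atTop (𝓝 0) := by
  -- `𝐞 y = exp (2πiy)`, so the Fourier transform at `t / (2π)` has real part `∫ f x cos (t x)`.
  have hw : Tendsto (fun t : ℝ => t / (2 * π)) atTop (cocompact ℝ) :=
    (tendsto_id.atTop_div_const (by positivity)).mono_right atTop_le_cocompact
  have hRL := (Complex.continuous_re.tendsto 0).comp
    ((Real.tendsto_integral_exp_smul_cocompact (fun x => (f x : ℂ))).comp hw)
  rw [Complex.zero_re] at hRL
  refine hRL.congr fun t => ?_
  have hint : Integrable fun x : ℝ => 𝐞 (-(x * (t / (2 * π)))) • (f x : ℂ) := by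
    simpa [mul_comm] using (Real.fourierIntegral_convergent_iff (t / (2 * π))).mpr hf.ofReal
  rw [Function.comp_apply, Function.comp_apply, ← RCLike.re_eq_complex_re, ← integral_re hint]
  congr 1 with x
  rw [Circle.smul_def, Real.fourierChar_apply, smul_eq_mul, RCLike.re_eq_complex_re,
    Complex.re_mul_ofReal, Complex.exp_ofReal_mul_I_re, mul_comm, ← cos_neg]
  congr 2
  field_simp

theorem tendsto_intervalIntegral_mul_cos_atTop {f : ℝ → ℝ} {a b : ℝ}
    (hf : IntervalIntegrable f volume a b) :
    Tendsto (fun t => ∫ x in a..b, f x * cos (t * x)) atTop (𝓝 0) := by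
  have h := (tendsto_integral_mul_cos_atTop
    ((intervalIntegrable_iff.mp hf).integrable_indicator measurableSet_uIoc)).const_smul
    (if a ≤ b then (1 : ℝ) else -1)
  rw [smul_zero] at h
  refine h.congr fun t => ?_
  rw [intervalIntegral.intervalIntegral_eq_integral_uIoc, ← integral_indicator measurableSet_uIoc]
  congr 2 with x
  exact (indicator_mul_left (uIoc a b) f fun x => cos (t * x)).symm

theorem hasDerivAt_pow_succ_mul_one_sub_sq_mul_sqrt (n : ℕ) {x : ℝ} (hx : x ∈ Ioo (-1 : ℝ) 1) :
    HasDerivAt (fun y => y ^ (n + 1) * ((1 - y ^ 2) * √(1 - y ^ 2)))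
      ((n + 1) * (x ^ n * √(1 - x ^ 2)) - (n + 4) * (x ^ (n + 2) * √(1 - x ^ 2))) x := by
  have hpos : 0 < 1 - x ^ 2 := by nlinarith [hx.1, hx.2]
  have hsq : HasDerivAt (fun y : ℝ => 1 - y ^ 2) (-(2 * x)) x := by
    simpa using (hasDerivAt_pow 2 x).const_sub 1
  have h : HasDerivAt (fun y => y ^ (n + 1) * ((1 - y ^ 2) * √(1 - y ^ 2))) _ x :=
    (hasDerivAt_pow (n + 1) x).mul (hsq.mul (hsq.sqrt hpos.ne'))
  convert h using 1
  field_simp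
  push_cast
  linear_combination (-x ^ (n + 2)) * sq_sqrt hpos.le

theorem integral_pow_add_two_mul_sqrt_one_sub_sq (n : ℕ) :
    ∫ x in (-1 : ℝ)..1, x ^ (n + 2) * √(1 - x ^ 2) =
      (n + 1) / (n + 4) * ∫ x in (-1 : ℝ)..1, x ^ n * √(1 - x ^ 2) := by
  have hcont : ∀ m : ℕ, Continuous fun x : ℝ => x ^ m * √(1 - x ^ 2) := fun m => by fun_prop
  have hFTC := intervalIntegral.integral_eq_sub_of_hasDerivAt_of_le (by norm_num)
    (by fun_prop) (fun x hx => hasDerivAt_pow_succ_mul_one_sub_sq_mul_sqrt n hx)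
    ((((hcont n).const_mul _).sub ((hcont (n + 2)).const_mul _)).intervalIntegrable _ _)
  rw [intervalIntegral.integral_sub (((hcont n).const_mul _).intervalIntegrable _ _)
    (((hcont (n + 2)).const_mul _).intervalIntegrable _ _), intervalIntegral.integral_const_mul,
    intervalIntegral.integral_const_mul] at hFTC
  norm_num at hFTC
  field_simp
  linarith

theorem integral_pow_two_mul_mul_sqrt_one_sub_sq (k : ℕ) :
    ∫ x in (-1 : ℝ)..1, x ^ (2 * k) * √(1 - x ^ 2) =
      π / 2 * (2 * k)! / (4 ^ k * k ! * (k + 1)!) := by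
  induction k with
  | zero => simpa using integral_sqrt_one_sub_sq
  | succ k ih =>
    rw [show 2 * (k + 1) = 2 * k + 2 by ring, integral_pow_add_two_mul_sqrt_one_sub_sq, ih,
      Nat.factorial_succ (2 * k + 1), Nat.factorial_succ (2 * k), Nat.factorial_succ (k + 1),
      Nat.factorial_succ k]
    push_cast
    field_simp
    ring

theorem hasSum_intervalIntegral_mul_cos {f : ℝ → ℝ} (hf : IntervalIntegrable f volume (-1) 1)
    (c : ℝ) :
    HasSum
      (fun k : ℕ => (-1) ^ k * c ^ (2 * k) / (2 * k)! * ∫ x in (-1 : ℝ)..1, x ^ (2 * k) * f x)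
      (∫ x in (-1 : ℝ)..1, f x * cos (c * x)) := by
  have h := intervalIntegral.hasSum_integral_of_dominated_convergence
    (F := fun k x => (-1) ^ k * (c * x) ^ (2 * k) / (2 * k)! * f x)
    (fun k x => |c| ^ (2 * k) / (2 * k)! * ‖f x‖)
    (fun k => (Continuous.aestronglyMeasurable (by fun_prop)).mul
      hf.aestronglyMeasurable_restrict_uIoc)
    (fun k => ae_of_all _ fun x hx => ?bound)
    (ae_of_all _ fun x _ => (Real.hasSum_cosh |c|).summable.mul_right _)
    (by simpa only [tsum_mul_right, (Real.hasSum_cosh |c|).tsum_eq] using hf.norm.const_mul _)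
    (ae_of_all _ fun x _ => (Real.hasSum_cos (c * x)).mul_right (f x))
  case bound =>
    have hx1 : |x| ≤ 1 := by
      rw [uIoc_of_le (by norm_num)] at hx
      exact abs_le.mpr ⟨hx.1.le, hx.2⟩
    rw [norm_mul, norm_div, norm_mul, norm_pow, norm_pow, norm_neg, norm_one, one_pow, one_mul,
      Real.norm_natCast, Real.norm_eq_abs, abs_mul]
    gcongr
    exact mul_le_of_le_one_right (abs_nonneg c) hx1
  have hterm (k : ℕ) : ∫ x in (-1 : ℝ)..1, (-1) ^ k * (c * x) ^ (2 * k) / (2 * k)! * f x =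
      (-1) ^ k * c ^ (2 * k) / (2 * k)! * ∫ x in (-1 : ℝ)..1, x ^ (2 * k) * f x := by
    rw [← intervalIntegral.integral_const_mul]
    congr 1 with x
    ring
  simpa only [hterm, mul_comm (cos _)] using h

theorem besselR_eq_integral (t : ℝ) :
    besselR t = 2 / π * ∫ x in (-1 : ℝ)..1, √(1 - x ^ 2) * cos (2 * t * x) := by
  have h := hasSum_intervalIntegral_mul_cos (f := fun x => √(1 - x ^ 2))
    (Continuous.intervalIntegrable (by fun_prop) _ _) (2 * t)
  simp only [integral_pow_two_mul_mul_sqrt_one_sub_sq] at h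
  refine ((h.mul_left (2 / π)).congr_fun fun k => ?_).tsum_eq
  rw [mul_pow, pow_mul, pow_mul]
  field_simp
  norm_num

/-- `r(t) → 0` as `t → +∞`. -/
theorem besselR_tendsto_zero : Tendsto besselR atTop (𝓝 0) := by
  have hRL := (tendsto_intervalIntegral_mul_cos_atTop (f := fun x => √(1 - x ^ 2))
    (Continuous.intervalIntegrable (by fun_prop) (-1) 1)).comp
    (tendsto_id.const_mul_atTop two_pos)
  simpa only [funext besselR_eq_integral, Function.comp_def, id, mul_zero] using
    hRL.const_mul (2 / π)
end

section
/- Let D > 0 be real and define g(u) = (2 + √D·u^{3/2} + 6u)/(1+u)² for u ≥ 0. Then sup_{u≥0} g(u) lies between 5/4 + (3√3/16)·√D and 9/4 + (3√3/16)·√D; in particular g(3) = 5/4 + (3√3/16)·√D, so the peak value of the form factor f₅ scales as (3√3/16)·√D to leading order in D. -/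
open Real Set

/-- `g(u) = (2 + √D·u^{3/2} + 6u)/(1+u)²`, the linearized form factor `f₅` near a
scrambling-beat peak, with `u = D·a_k⁴·δt⁴`. -/
noncomputable def gPeak (D u : ℝ) : ℝ :=
  (2 + Real.sqrt D * u ^ ((3:ℝ)/2) + 6 * u) / (1 + u) ^ 2

lemma rpow_three_half (u : ℝ) (hu : 0 ≤ u) : u ^ ((3:ℝ)/2) = Real.sqrt u ^ 3 := by
  rw [show ((3:ℝ)/2) = (1/2 : ℝ) * (3:ℕ) by norm_num, Real.rpow_mul hu,
    Real.rpow_natCast, ← Real.sqrt_eq_rpow]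

lemma gPeak_le (D u : ℝ) (hD : 0 < D) (hu : 0 ≤ u) :
    gPeak D u ≤ 9/4 + (3 * Real.sqrt 3 / 16) * Real.sqrt D := by
  have hP : (0:ℝ) < (1 + u) ^ 2 := by positivity
  rw [gPeak, div_le_iff₀ hP, rpow_three_half u hu]
  set s := Real.sqrt u with hs
  have hs0 : 0 ≤ s := Real.sqrt_nonneg u
  have hsu : s ^ 2 = u := Real.sq_sqrt hu
  set t := Real.sqrt 3 with ht
  have ht0 : 0 ≤ t := Real.sqrt_nonneg 3
  have ht3 : t ^ 2 = 3 := Real.sq_sqrt (by norm_num)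
  have hd0 : 0 ≤ Real.sqrt D := Real.sqrt_nonneg D
  -- key: 16 s^3 ≤ 3 t (1+s²)², i.e. (s-t)²(3ts²+2s+t) ≥ 0
  have expand : 3 * t / 16 * (1 + s ^ 2) ^ 2 - s ^ 3
      = (s - t) ^ 2 * (3 * t * s ^ 2 + 2 * s + t) / 16 := by
    linear_combination (-(3 * t * s ^ 2 - 6 * s ^ 3 + t) / 16) * ht3
  have key : s ^ 3 ≤ 3 * t / 16 * (1 + s ^ 2) ^ 2 := by
    nlinarith [expand, mul_nonneg (sq_nonneg (s - t))
      (show (0:ℝ) ≤ 3*t*s^2 + 2*s + t by positivity)]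
  have h1 : 2 + 6 * u ≤ 9/4 * (1 + u) ^ 2 := by nlinarith [sq_nonneg (3*u - 1)]
  have h2 : Real.sqrt D * s ^ 3 ≤ (3 * t / 16) * Real.sqrt D * (1 + u) ^ 2 := by
    rw [← hsu]
    calc Real.sqrt D * s ^ 3 ≤ Real.sqrt D * (3 * t / 16 * (1 + s ^ 2) ^ 2) :=
          mul_le_mul_of_nonneg_left key hd0
      _ = (3 * t / 16) * Real.sqrt D * (1 + s ^ 2) ^ 2 := by ring
  nlinarith [h1, h2]

lemma gPeak_three (D : ℝ) :
    gPeak D 3 = 5/4 + (3 * Real.sqrt 3 / 16) * Real.sqrt D := by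
  have h3 : (3:ℝ) ^ ((3:ℝ)/2) = Real.sqrt 3 ^ 3 := rpow_three_half 3 (by norm_num)
  have hc : Real.sqrt 3 ^ 3 = 3 * Real.sqrt 3 := by
    rw [pow_succ, Real.sq_sqrt (by norm_num : (0:ℝ) ≤ 3)]
  rw [gPeak, h3, hc]
  ring

/-- For `D > 0`, the supremum of `g` over `u ≥ 0` lies between
`5/4 + (3√3/16)√D` and `9/4 + (3√3/16)√D`, and `g(3) = 5/4 + (3√3/16)√D`:
the peak value of the form factor `f₅` scales as `(3√3/16)√D` to leading order. -/
theorem f5_peak_value_scaling (D : ℝ) (hD : 0 < D) :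
    5/4 + (3 * Real.sqrt 3 / 16) * Real.sqrt D ≤ sSup (gPeak D '' Ici (0:ℝ)) ∧
    sSup (gPeak D '' Ici (0:ℝ)) ≤ 9/4 + (3 * Real.sqrt 3 / 16) * Real.sqrt D ∧
    gPeak D 3 = 5/4 + (3 * Real.sqrt 3 / 16) * Real.sqrt D := by
  have hmem : gPeak D 3 ∈ gPeak D '' Ici (0:ℝ) :=
    ⟨3, by norm_num, rfl⟩
  have hbdd : BddAbove (gPeak D '' Ici (0:ℝ)) := by
    refine ⟨9/4 + (3 * Real.sqrt 3 / 16) * Real.sqrt D, ?_⟩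
    rintro x ⟨u, hu, rfl⟩
    exact gPeak_le D u hD hu
  refine ⟨?_, ?_, gPeak_three D⟩
  · rw [← gPeak_three D]
    exact le_csSup hbdd hmem
  · exact csSup_le ⟨_, hmem⟩ (by rintro x ⟨u, hu, rfl⟩; exact gPeak_le D u hD hu)
end
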